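/- Let V : ℝ³ → ℝ be continuously differentiable with bounded gradient ∇V, and let u be a Schwartz function on ℝ³×ℝ³. Then for all (x,v) ∈ ℝ³×ℝ³: Θ[V]u(x,v) = div_v( Γ[∇V]u )(x,v), where Θ[V]u(x,v) := i (2π)^{-3/2} ∫_{ℝ³} (V(x+η/2) − V(x−η/2)) (F_{v→η}u)(x,η) e^{i v·η} dη and Γ[∇V]u(x,v) := F^{-1}_{η→v}( W(x,η) (F_{v→η}u)(x,η) ) with W(x,η) := ∫_{−1/2}^{1/2} ∇V(x − rη) dr. In particular V(x+η/2) − V(x−η/2) = η · W(x,η) for all x, η. -/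

import Mathlib

open MeasureTheory Real Filter ENNReal RealInnerProductSpace

noncomputable section

abbrev E3 := EuclideanSpace ℝ (Fin 3)

/-- The `i`-th standard basis vector of `ℝ³`. -/
def e3 (i : Fin 3) : E3 := EuclideanSpace.single i 1

/-- `W(x,η) = ∫_{−1/2}^{1/2} E(x − rη) dr` for a vector field `E`. -/
def Wfield (E : E3 → E3) (x η : E3) : E3 :=
  ∫ r in (-(1/2) : ℝ)..(1/2 : ℝ), E (x - r • η)

/-- Partial Fourier transform in the velocity variable. -/
def fourierV (u : E3 × E3 → ℝ) (x η : E3) : ℂ :=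
  ((2 * π : ℝ) ^ (-(3:ℝ)/2) : ℝ) *
    ∫ v : E3, (u (x, v) : ℂ) * Complex.exp (-(Complex.I) * ((⟪v, η⟫ : ℝ) : ℂ))

/-- The `k`-th component of `Γ[E]u(x,v) = F⁻¹_{η→v}( W(x,η) (F_{v→η}u)(x,η) )`. -/
def Gamma (E : E3 → E3) (u : E3 × E3 → ℝ) (k : Fin 3) (x v : E3) : ℂ :=
  ((2 * π : ℝ) ^ (-(3:ℝ)/2) : ℝ) *
    ∫ η : E3, ((Wfield E x η k : ℝ) : ℂ) * fourierV u x η *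
      Complex.exp (Complex.I * ((⟪v, η⟫ : ℝ) : ℂ))

/-- The pseudo-differential operator
`Θ[V]u(x,v) = i (2π)^{-3/2} ∫ (V(x+η/2) − V(x−η/2)) (F_{v→η}u)(x,η) e^{i v·η} dη`. -/
def Theta (V : E3 → ℝ) (u : E3 × E3 → ℝ) (x v : E3) : ℂ :=
  Complex.I * ((2 * π : ℝ) ^ (-(3:ℝ)/2) : ℝ) *
    ∫ η : E3, ((V (x + (2:ℝ)⁻¹ • η) - V (x - (2:ℝ)⁻¹ • η) : ℝ) : ℂ) *
      fourierV u x η * Complex.exp (Complex.I * ((⟪v, η⟫ : ℝ) : ℂ))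

/-!
The second identity is the fundamental theorem of calculus along the segment `r ↦ x - r • η`,
`r ∈ [-1/2, 1/2]`. Substituting it into `Θ` replaces the symbol `V(x+η/2) - V(x-η/2)` by
`∑ₖ ηₖ Wₖ(x,η)`, and `i ηₖ e^{i⟪v,η⟫}` is the `vₖ`-derivative of the plane wave `e^{i⟪v,η⟫}`.
The amplitude `Wₖ(x,η) (F_{v→η}u)(x,η)` is a bounded continuous function times a Schwartz
function of `η`, so it is integrable against `1 + ‖η‖`, and the `vₖ`-derivative of `Γₖ` may be
taken under the integral sign.
-/

open scoped SchwartzMap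

lemma hasTemperateGrowth_prodMk {D E : Type*} [NormedAddCommGroup D] [NormedSpace ℝ D]
    [NormedAddCommGroup E] [NormedSpace ℝ E] (x : D) :
    (Prod.mk x : E → D × E).HasTemperateGrowth := by
  convert (Function.HasTemperateGrowth.const (x, (0 : E))).add
    (ContinuousLinearMap.inr ℝ D E).hasTemperateGrowth using 1
  ext v <;> simp

namespace SchwartzMap

variable {D E F : Type*} [NormedAddCommGroup D] [NormedSpace ℝ D] [NormedAddCommGroup E]
  [NormedSpace ℝ E] [NormedAddCommGroup F] [NormedSpace ℝ F]

def sliceRight (u : 𝓢(D × E, F)) (x : D) : 𝓢(E, F) :=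
  compCLM ℝ (hasTemperateGrowth_prodMk x)
    ⟨1, 1, fun v => by simpa using (norm_snd_le (x, v)).trans (le_add_of_nonneg_left zero_le_one)⟩ u

@[simp] lemma sliceRight_apply (u : 𝓢(D × E, F)) (x : D) (v : E) : u.sliceRight x v = u (x, v) :=
  rfl

lemma integrable_norm_mul_norm_bdd_mul [MeasurableSpace E] [BorelSpace E]
    [SecondCountableTopology E] {μ : Measure E} [μ.HasTemperateGrowth] (f : 𝓢(E, ℂ)) {g : E → ℂ}
    {M : ℝ} (hg : AEStronglyMeasurable g μ) (hM : ∀ η, ‖g η‖ ≤ M) :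
    Integrable (fun η => ‖η‖ * ‖g η * f η‖) μ := by
  simpa [norm_mul, mul_left_comm] using
    (f.integrable_pow_mul μ 1).bdd_mul hg.norm
      (ae_of_all _ fun η => (norm_norm (g η)).trans_le (hM η))

end SchwartzMap

/-- `fourierV u x` is `(2π)^{-3/2}` times Mathlib's Fourier transform (normalised with
`e^{-2πi⟪v, ξ⟫}`) of the slice `u(x, ·)`, evaluated at `ξ = η / (2π)`. -/
def fourierVSchwartz (u : 𝓢(E3 × E3, ℝ)) (x : E3) : 𝓢(E3, ℂ) :=
  (((2 * π : ℝ) ^ (-(3:ℝ)/2) : ℝ) : ℂ) • SchwartzMap.compCLMOfContinuousLinearEquiv ℝ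
    (LinearEquiv.smulOfNeZero ℝ E3 (2 * π)⁻¹ (by positivity)).toContinuousLinearEquiv
    (FourierTransform.fourier ((u.sliceRight x).postcompCLM Complex.ofRealCLM))

lemma fourierVSchwartz_apply (u : 𝓢(E3 × E3, ℝ)) (x η : E3) :
    fourierVSchwartz u x η = fourierV u x η := by
  simp only [fourierVSchwartz, fourierV, smul_apply, smul_eq_mul,
    SchwartzMap.compCLMOfContinuousLinearEquiv_apply, Function.comp_apply,
    LinearEquiv.coe_toContinuousLinearEquiv', LinearEquiv.smulOfNeZero_apply,
    SchwartzMap.fourier_coe, Real.fourier_eq']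
  congr 1
  refine integral_congr_ae (ae_of_all _ fun v => ?_)
  simp only [SchwartzMap.postcompCLM_apply, SchwartzMap.sliceRight_apply, real_inner_smul_right]
  rw [mul_comm, Complex.ofRealCLM_apply]
  congr 2
  push_cast
  field_simp

section PlaneWave

variable {F : Type*} [NormedAddCommGroup F] [InnerProductSpace ℝ F]

lemma continuous_exp_I_mul_inner (w : F) :
    Continuous fun η : F => Complex.exp (Complex.I * ⟪w, η⟫) := by
  fun_prop

lemma norm_mul_exp_I_mul_inner_mul_I (c : ℂ) (w η : F) :
    ‖c * Complex.exp (Complex.I * ⟪w, η⟫) * Complex.I‖ = ‖c‖ := by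
  rw [norm_mul, norm_mul, Complex.norm_exp_I_mul_ofReal, Complex.norm_I, mul_one, mul_one]

lemma hasFDerivAt_exp_I_mul_inner (η w : F) :
    HasFDerivAt (fun w : F => Complex.exp (Complex.I * ⟪w, η⟫))
      ((Complex.exp (Complex.I * ⟪w, η⟫) * Complex.I) • (Complex.ofRealCLM ∘L innerSL ℝ η)) w := by
  have hinner : HasFDerivAt (fun w : F => (⟪w, η⟫ : ℂ)) (Complex.ofRealCLM ∘L innerSL ℝ η) w := by
    convert (Complex.ofRealCLM ∘L innerSL ℝ η).hasFDerivAt (x := w) using 1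
    ext w'
    simp [real_inner_comm]
  convert ((hinner.const_mul Complex.I).cexp) using 1
  rw [smul_smul]

lemma norm_smul_ofRealCLM_comp_innerSL_le (c : ℂ) (η : F) :
    ‖c • (Complex.ofRealCLM ∘L innerSL ℝ η)‖ ≤ ‖η‖ * ‖c‖ := by
  rw [norm_smul, mul_comm]
  gcongr
  exact (Complex.ofRealCLM.opNorm_comp_le _).trans_eq (by simp)

variable [MeasurableSpace F] [BorelSpace F] {μ : Measure F} {a : F → ℂ}

lemma aestronglyMeasurable_mul_exp_I_mul_inner (ha : AEStronglyMeasurable a μ) (w : F) :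
    AEStronglyMeasurable (fun η => a η * Complex.exp (Complex.I * ⟪w, η⟫)) μ :=
  ha.mul (continuous_exp_I_mul_inner w).aestronglyMeasurable

variable [FiniteDimensional ℝ F]

lemma integrable_mul_exp_I_mul_inner_mul_I_smul (ha : AEStronglyMeasurable a μ)
    (ha' : Integrable (fun η => ‖η‖ * ‖a η‖) μ) (w : F) :
    Integrable (fun η => (a η * Complex.exp (Complex.I * ⟪w, η⟫) * Complex.I) •
      (Complex.ofRealCLM ∘L innerSL ℝ η)) μ :=
  ha'.mono' (((aestronglyMeasurable_mul_exp_I_mul_inner ha w).mul_const _).smul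
      (by fun_prop : Continuous _).aestronglyMeasurable)
    (ae_of_all _ fun η => (norm_smul_ofRealCLM_comp_innerSL_le _ η).trans_eq
      (by rw [norm_mul_exp_I_mul_inner_mul_I]))

lemma hasFDerivAt_integral_mul_exp_I_mul_inner (ha : Integrable a μ)
    (ha' : Integrable (fun η => ‖η‖ * ‖a η‖) μ) (v : F) :
    HasFDerivAt (fun w => ∫ η, a η * Complex.exp (Complex.I * ⟪w, η⟫) ∂μ)
      (∫ η, (a η * Complex.exp (Complex.I * ⟪v, η⟫) * Complex.I) •
        (Complex.ofRealCLM ∘L innerSL ℝ η) ∂μ) v := by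
  refine hasFDerivAt_integral_of_dominated_of_fderiv_le (𝕜 := ℝ) (bound := fun η => ‖η‖ * ‖a η‖)
    (F' := fun w η => (a η * Complex.exp (Complex.I * ⟪w, η⟫) * Complex.I) •
      (Complex.ofRealCLM ∘L innerSL ℝ η))
    (Metric.ball_mem_nhds v one_pos)
    (.of_forall (aestronglyMeasurable_mul_exp_I_mul_inner ha.1)) ?_
    (integrable_mul_exp_I_mul_inner_mul_I_smul ha.1 ha' v).aestronglyMeasurable ?_ ha' ?_
  · refine (integrable_norm_iff (aestronglyMeasurable_mul_exp_I_mul_inner ha.1 v)).mp ?_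
    simpa [Complex.norm_exp_I_mul_ofReal] using ha.norm
  · refine ae_of_all _ fun η w _ => (norm_smul_ofRealCLM_comp_innerSL_le _ η).trans_eq ?_
    rw [norm_mul_exp_I_mul_inner_mul_I]
  · refine ae_of_all _ fun η w _ => ?_
    have := (hasFDerivAt_exp_I_mul_inner η w).const_mul (a η)
    rwa [smul_smul, ← mul_assoc] at this

lemma fderiv_const_mul_integral_mul_exp_I_mul_inner_apply (ha : Integrable a μ)
    (ha' : Integrable (fun η => ‖η‖ * ‖a η‖) μ) (c : ℂ) (v y : F) :
    fderiv ℝ (fun w => c * ∫ η, a η * Complex.exp (Complex.I * ⟪w, η⟫) ∂μ) v y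
      = c * ∫ η, a η * Complex.exp (Complex.I * ⟪v, η⟫) * Complex.I * ⟪η, y⟫ ∂μ := by
  rw [((hasFDerivAt_integral_mul_exp_I_mul_inner ha ha' v).const_mul c).fderiv, smul_apply,
    ContinuousLinearMap.integral_apply (integrable_mul_exp_I_mul_inner_mul_I_smul ha.1 ha' v),
    smul_eq_mul]
  rfl

lemma integrable_mul_exp_I_mul_inner_mul_I_mul_inner (ha : AEStronglyMeasurable a μ)
    (ha' : Integrable (fun η => ‖η‖ * ‖a η‖) μ) (w y : F) :
    Integrable (fun η => a η * Complex.exp (Complex.I * ⟪w, η⟫) * Complex.I * ⟪η, y⟫) μ :=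
  (integrable_mul_exp_I_mul_inner_mul_I_smul ha ha' w).apply_continuousLinearMap y

end PlaneWave

section Gradient

variable {F : Type*} [NormedAddCommGroup F] [InnerProductSpace ℝ F] [CompleteSpace F] {V : F → ℝ}

lemma continuous_gradient_of_contDiff (hV : ContDiff ℝ 1 V) : Continuous (gradient V) :=
  (InnerProductSpace.toDual ℝ F).symm.continuous.comp (hV.continuous_fderiv one_ne_zero)

lemma inner_intervalIntegral_gradient_sub_smul (hV : ContDiff ℝ 1 V) (x η : F) (a b : ℝ) :
    ⟪η, ∫ r in a..b, gradient V (x - r • η)⟫ = V (x - a • η) - V (x - b • η) := by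
  have hcont : Continuous fun r : ℝ => gradient V (x - r • η) :=
    (continuous_gradient_of_contDiff hV).comp (by fun_prop)
  have hderiv (r : ℝ) :
      HasDerivAt (fun r : ℝ => V (x - r • η)) (-⟪η, gradient V (x - r • η)⟫) r := by
    have hline : HasDerivAt (fun r : ℝ => x - r • η) (-η) r := by
      simpa using ((hasDerivAt_id r).smul_const η).const_sub x
    exact ((hV.differentiable one_ne_zero _).hasGradientAt.hasFDerivAt.comp_hasDerivAt r
      hline).congr_deriv (by simp)
  rw [← innerSL_apply_apply,
    ← (innerSL ℝ η).intervalIntegral_comp_comm (hcont.intervalIntegrable a b),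
    ← neg_sub, ← intervalIntegral.integral_eq_sub_of_hasDerivAt (fun r _ => hderiv r)
      ((continuous_const.inner hcont).neg.intervalIntegrable a b),
    intervalIntegral.integral_neg, neg_neg]
  rfl

end Gradient

lemma sub_eq_inner_Wfield {V : E3 → ℝ} (hV : ContDiff ℝ 1 V) (x η : E3) :
    V (x + (2:ℝ)⁻¹ • η) - V (x - (2:ℝ)⁻¹ • η) = ⟪η, Wfield (gradient V) x η⟫ := by
  rw [Wfield, inner_intervalIntegral_gradient_sub_smul hV]
  norm_num [sub_eq_add_neg]

lemma norm_Wfield_le {E : E3 → E3} {M : ℝ} (hM : ∀ y, ‖E y‖ ≤ M) (x η : E3) :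
    ‖Wfield E x η‖ ≤ M := by
  calc ‖Wfield E x η‖ ≤ M * |1 / 2 - -(1 / 2)| :=
        intervalIntegral.norm_integral_le_of_norm_le_const fun r _ => hM _
    _ = M := by norm_num

lemma continuous_Wfield {E : E3 → E3} (hE : Continuous E) (x : E3) : Continuous (Wfield E x) :=
  intervalIntegral.continuous_parametric_intervalIntegral_of_continuous' (by fun_prop) _ _

lemma inner_eq_sum_mul_inner_e3 (η w : E3) : ⟪η, w⟫ = ∑ k : Fin 3, w k * ⟪η, e3 k⟫ := by
  simp [e3, PiLp.inner_apply]

lemma aestronglyMeasurable_Wfield_apply {E : E3 → E3} (hE : Continuous E) (x : E3) (k : Fin 3) :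
    AEStronglyMeasurable (fun η => (Wfield E x η k : ℂ)) volume := by
  have := continuous_Wfield hE x
  fun_prop

lemma norm_Wfield_apply_le {E : E3 → E3} {M : ℝ} (hM : ∀ y, ‖E y‖ ≤ M) (x η : E3) (k : Fin 3) :
    ‖(Wfield E x η k : ℂ)‖ ≤ M := by
  rw [Complex.norm_real]
  exact (PiLp.norm_apply_le _ k).trans (norm_Wfield_le hM x η)

lemma integrable_Wfield_apply_mul_fourierV {E : E3 → E3} {M : ℝ} (hE : Continuous E)
    (hM : ∀ y, ‖E y‖ ≤ M) (u : 𝓢(E3 × E3, ℝ)) (x : E3) (k : Fin 3) :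
    Integrable (fun η => (Wfield E x η k : ℂ) * fourierV u x η) := by
  simpa only [fourierVSchwartz_apply] using (fourierVSchwartz u x).integrable.bdd_mul
    (aestronglyMeasurable_Wfield_apply hE x k) (ae_of_all _ fun η => norm_Wfield_apply_le hM x η k)

lemma integrable_norm_mul_norm_Wfield_apply_mul_fourierV {E : E3 → E3} {M : ℝ}
    (hE : Continuous E) (hM : ∀ y, ‖E y‖ ≤ M) (u : 𝓢(E3 × E3, ℝ)) (x : E3) (k : Fin 3) :
    Integrable (fun η => ‖η‖ * ‖(Wfield E x η k : ℂ) * fourierV u x η‖) := by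
  simpa only [fourierVSchwartz_apply] using
    (fourierVSchwartz u x).integrable_norm_mul_norm_bdd_mul
      (aestronglyMeasurable_Wfield_apply hE x k) (fun η => norm_Wfield_apply_le hM x η k)

/-- Lemma 4.4: `Θ[V]u = div_v(Γ[∇V]u)`, and `V(x+η/2) − V(x−η/2) = η·W(x,η)`. -/
theorem theta_eq_div_gamma (V : E3 → ℝ) (hV : ContDiff ℝ 1 V)
    (hbd : BddAbove (Set.range fun x => ‖gradient V x‖))
    (u : SchwartzMap (E3 × E3) ℝ) :
    (∀ x v : E3,
      Theta V (⇑u) x v =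
        ∑ k : Fin 3,
          fderiv ℝ (fun v' : E3 => Gamma (fun y => gradient V y) (⇑u) k x v') v (e3 k)) ∧
    (∀ x η : E3,
      V (x + (2:ℝ)⁻¹ • η) - V (x - (2:ℝ)⁻¹ • η) = ⟪η, Wfield (fun y => gradient V y) x η⟫) := by
  refine ⟨fun x v => ?_, fun x η => sub_eq_inner_Wfield hV x η⟩
  obtain ⟨M, hM⟩ := hbd
  have hE := continuous_gradient_of_contDiff hV
  have hEM (y : E3) : ‖gradient V y‖ ≤ M := hM ⟨y, rfl⟩
  set c : ℂ := (((2 * π : ℝ) ^ (-(3:ℝ)/2) : ℝ) : ℂ)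
  set a := fun (k : Fin 3) η => (Wfield (gradient V) x η k : ℂ) * fourierV u x η
  have ha k := integrable_Wfield_apply_mul_fourierV hE hEM u x k
  have ha' k := integrable_norm_mul_norm_Wfield_apply_mul_fourierV hE hEM u x k
  calc Theta V u x v
      = c * ∫ η, ∑ k : Fin 3, a k η * Complex.exp (Complex.I * ⟪v, η⟫) * Complex.I * ⟪η, e3 k⟫ := by
        rw [Theta, mul_right_comm, ← integral_const_mul, mul_comm]
        congr 1
        refine integral_congr_ae (ae_of_all _ fun η => ?_)
        dsimp only [a]
        rw [sub_eq_inner_Wfield hV, inner_eq_sum_mul_inner_e3]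
        push_cast
        simp only [Finset.mul_sum, Finset.sum_mul]
        exact Finset.sum_congr rfl fun k _ => by ring
    _ = ∑ k : Fin 3, fderiv ℝ (fun v' : E3 => Gamma (gradient V) u k x v') v (e3 k) := by
        rw [integral_finsetSum _ fun k _ =>
          integrable_mul_exp_I_mul_inner_mul_I_mul_inner (ha k).1 (ha' k) v (e3 k), Finset.mul_sum]
        exact Finset.sum_congr rfl fun k _ =>
          (fderiv_const_mul_integral_mul_exp_I_mul_inner_apply (ha k) (ha' k) c v (e3 k)).symm

end
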